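/- Let 0 < r₁ < r₂ and 0 ≤ t < r₂ - r₁. Define α = sqrt(((r₂+r₁)² - t²)((r₂-r₁)² - t²))/(2t) for t > 0. Then, as ε := r₂ - r₁ - t → 0⁺, α = r_* √ε + O(ε√ε) where r_* = sqrt(2 r₁ r₂/(r₂ - r₁)). -/

import Mathlib

open Filter Asymptotics

/-- For `0 < r₁ < r₂`, with `t = r₂ - r₁ - ε` and
`α = sqrt(((r₂+r₁)² - t²)((r₂-r₁)² - t²))/(2t)`, one has
`α = r_* √ε + O(ε√ε)` as `ε → 0⁺`, where `r_* = sqrt(2r₁r₂/(r₂-r₁))`. -/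
theorem alpha_asymptotics (r₁ r₂ : ℝ) (h₁ : 0 < r₁) (h₁₂ : r₁ < r₂) :
    (fun ε : ℝ =>
        Real.sqrt (((r₂ + r₁) ^ 2 - (r₂ - r₁ - ε) ^ 2) *
            ((r₂ - r₁) ^ 2 - (r₂ - r₁ - ε) ^ 2)) / (2 * (r₂ - r₁ - ε)) -
          Real.sqrt (2 * r₁ * r₂ / (r₂ - r₁)) * Real.sqrt ε)
      =O[nhdsWithin 0 (Set.Ioi 0)] (fun ε : ℝ => ε * Real.sqrt ε) := by
  have hd : 0 < r₂ - r₁ := sub_pos.2 h₁₂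
  set g : ℝ → ℝ := fun ε =>
    Real.sqrt ((2*r₁+ε) * ((2*r₂-ε) * (2*(r₂-r₁)-ε))) / (2*(r₂-r₁-ε)) with hg
  have hdiff : DifferentiableAt ℝ g 0 := by
    apply DifferentiableAt.div
    · apply DifferentiableAt.sqrt
      · fun_prop
      · simp only [add_zero, sub_zero]
        exact (mul_pos (by linarith) (mul_pos (by linarith) (by linarith))).ne'
    · fun_prop
    · simp only [sub_zero]
      exact (mul_pos two_pos hd).ne'
  have hO : (fun ε => g ε - g 0) =O[nhds (0:ℝ)] (fun ε => ε) := by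
    simpa using hdiff.hasFDerivAt.isBigO_sub
  have hO' := hO.mono (nhdsWithin_le_nhds (s := Set.Ioi (0:ℝ)))
  have hmain : (fun ε => Real.sqrt ε * (g ε - g 0))
      =O[nhdsWithin 0 (Set.Ioi 0)] (fun ε => Real.sqrt ε * ε) :=
    (isBigO_refl (fun ε : ℝ => Real.sqrt ε) _).mul hO'
  have h2d : (0:ℝ) < 2*(r₂-r₁) := by linarith
  have hg0 : Real.sqrt (2 * r₁ * r₂ / (r₂ - r₁)) = g 0 := by
    rw [hg]
    simp only [add_zero, sub_zero]
    rw [show (2*r₁) * ((2*r₂) * (2*(r₂-r₁))) =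
        (2 * r₁ * r₂ / (r₂ - r₁)) * (2*(r₂-r₁))^2 by field_simp,
      Real.sqrt_mul (show (0:ℝ) ≤ 2 * r₁ * r₂ / (r₂ - r₁) from div_nonneg (mul_pos (mul_pos two_pos h₁) (h₁.trans h₁₂)).le (by linarith)) ((2*(r₂-r₁))^2),
      Real.sqrt_sq h2d.le]
    exact (mul_div_cancel_right₀ _ h2d.ne').symm
  have heq : (fun ε : ℝ =>
        Real.sqrt (((r₂ + r₁) ^ 2 - (r₂ - r₁ - ε) ^ 2) *
            ((r₂ - r₁) ^ 2 - (r₂ - r₁ - ε) ^ 2)) / (2 * (r₂ - r₁ - ε)) -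
          Real.sqrt (2 * r₁ * r₂ / (r₂ - r₁)) * Real.sqrt ε)
      =ᶠ[nhdsWithin 0 (Set.Ioi 0)] (fun ε => Real.sqrt ε * (g ε - g 0)) := by
    filter_upwards [Ioo_mem_nhdsGT_of_mem (Set.mem_Ico.2 ⟨le_refl (0:ℝ), hd⟩)] with ε hε
    have hP : Real.sqrt (((r₂ + r₁) ^ 2 - (r₂ - r₁ - ε) ^ 2) *
        ((r₂ - r₁) ^ 2 - (r₂ - r₁ - ε) ^ 2)) =
        Real.sqrt ε * Real.sqrt ((2*r₁+ε) * ((2*r₂-ε) * (2*(r₂-r₁)-ε))) := by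
      rw [show ((r₂ + r₁) ^ 2 - (r₂ - r₁ - ε) ^ 2) *
          ((r₂ - r₁) ^ 2 - (r₂ - r₁ - ε) ^ 2) =
          ε * ((2*r₁+ε) * ((2*r₂-ε) * (2*(r₂-r₁)-ε))) by ring,
        Real.sqrt_mul hε.1.le]
    rw [hP, ← hg0]
    simp only [hg]
    ring
  have hrhs : (fun ε : ℝ => Real.sqrt ε * ε) =ᶠ[nhdsWithin 0 (Set.Ioi 0)]
      (fun ε : ℝ => ε * Real.sqrt ε) := by
    filter_upwards with ε using mul_comm _ _
  exact (hmain.congr' heq.symm hrhs)
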